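/- arXiv:1109.4047 — 4 statements merged into one kernel-verified Lean document; each statement's English description precedes it below -/
import Mathlib

section
/- Let N ≥ 1 and k ≥ 1. Consider the set G of tuples y : Fin k → ℝ^N such that (a) for every subset s ⊆ Fin k of cardinality at most N + 1, the family (y_i)_{i ∈ s} is affinely independent, and (b) for every subset s ⊆ Fin k of cardinality N + 2, there is no point x ∈ ℝ^N equidistant from all the points y_i, i ∈ s (equivalently, no N + 2 of the points lie on a common sphere). Then G is open and dense in the space (ℝ^N)^k of all such tuples. -/
/-- A tuple of `k` points of `ℝ^N` is in *general position* if every at most `N + 1` of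
them are affinely independent and no `N + 2` of them lie on a common sphere (i.e. no
point of `ℝ^N` is equidistant from `N + 2` of them). For point sets in general position
the associated Voronoi complex is simple. -/
def InGeneralPosition (N k : ℕ) (y : Fin k → EuclideanSpace ℝ (Fin N)) : Prop :=
  (∀ s : Finset (Fin k), s.card ≤ N + 1 →
      AffineIndependent ℝ (fun i : s => y i)) ∧
  (∀ s : Finset (Fin k), s.card = N + 2 →
      ¬ ∃ (x : EuclideanSpace ℝ (Fin N)) (r : ℝ), ∀ i ∈ s, dist x (y i) = r)

/-!
Lifting `v ↦ (v, ‖v‖²)` onto the paraboloid in `ℝ^N × ℝ` turns spheres into hyperplanes: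
`dist x v = r` iff `⟪(-2x, 1), (v, ‖v‖²)⟫ = r² - ‖x‖²`. Given that every `N + 1` of the
points are affinely independent (so that no `N + 2` of them lie on a hyperplane of `ℝ^N`),
`N + 2` points are cospherical iff their lifts are affinely dependent. General position is
therefore a finite intersection of conditions "these `m ≤ dim + 1` points are affinely
independent", for the points or for their lifts. Each such condition is open, and it is dense
because a point can be moved off any proper affine subspace: a real-analytic map whose image
spans affinely cannot send a nonempty open set into a proper affine subspace.
-/

open scoped RealInnerProductSpace
open Module Set

section Hyperplane

variable {V : Type*} [NormedAddCommGroup V] [InnerProductSpace ℝ V]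

theorem AffineSubspace.exists_inner_eq_of_direction_ne_top [FiniteDimensional ℝ V]
    {A : AffineSubspace ℝ V} (hA : A.direction ≠ ⊤) :
    ∃ w ≠ (0 : V), ∃ b : ℝ, ∀ p ∈ A, ⟪w, p⟫ = b := by
  obtain ⟨w, hw, hw0⟩ := A.direction.orthogonal.exists_mem_ne_zero_of_ne_bot
    (mt Submodule.orthogonal_eq_bot_iff.mp hA)
  rcases (A : Set V).eq_empty_or_nonempty with hA0 | ⟨p₀, hp₀⟩
  · exact ⟨w, hw0, 0, fun p hp => by simp [← SetLike.mem_coe, hA0] at hp⟩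
  refine ⟨w, hw0, ⟪w, p₀⟫, fun p hp => ?_⟩
  have := (Submodule.mem_orthogonal' _ w).mp hw _ (A.vsub_mem_direction hp hp₀)
  rw [vsub_eq_sub, inner_sub_right] at this
  linarith

theorem eq_zero_of_inner_eq_of_affineSpan_eq_top {s : Set V} (hs : affineSpan ℝ s = ⊤)
    {w : V} {b : ℝ} (h : ∀ p ∈ s, ⟪w, p⟫ = b) : w = 0 := by
  have hf : (innerₛₗ ℝ w).toAffineMap = AffineMap.const ℝ V b :=
    AffineMap.ext_on hs fun p hp => h p hp
  have h0 := congrArg (· 0) hf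
  have hw := congrArg (· w) hf
  simp only [LinearMap.coe_toAffineMap, map_zero, AffineMap.const_apply, innerₛₗ_apply_apply]
    at h0 hw
  rw [← h0] at hw
  exact inner_self_eq_zero.mp hw

theorem not_affineIndependent_iff_exists_inner_eq [FiniteDimensional ℝ V] {ι : Type*} [Fintype ι]
    {p : ι → V} (hcard : Fintype.card ι = finrank ℝ V + 1) :
    ¬ AffineIndependent ℝ p ↔ ∃ w ≠ (0 : V), ∃ b : ℝ, ∀ i, ⟪w, p i⟫ = b := by
  constructor
  · intro hp
    have hspan : (affineSpan ℝ (range p)).direction ≠ ⊤ := by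
      rw [direction_affineSpan]
      intro htop
      refine hp ((affineIndependent_iff_le_finrank_vectorSpan ℝ p hcard).mpr ?_)
      rw [htop, finrank_top]
    obtain ⟨w, hw, b, hb⟩ := AffineSubspace.exists_inner_eq_of_direction_ne_top hspan
    exact ⟨w, hw, b, fun i => hb _ (mem_affineSpan ℝ (mem_range_self i))⟩
  · rintro ⟨w, hw, b, hb⟩ hp
    exact hw (eq_zero_of_inner_eq_of_affineSpan_eq_top
      (hp.affineSpan_eq_top_iff_card_eq_finrank_add_one.mpr hcard) (by simpa using hb))

end Hyperplane

section Density

theorem dense_of_forall_dense_update {X ι : Type*} [TopologicalSpace X] [DecidableEq ι]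
    {D S : Set (ι → X)} (hD : Dense D) (j : ι)
    (h : ∀ y ∈ D, Dense {v | Function.update y j v ∈ S}) : Dense S := by
  rw [dense_iff_inter_open]
  intro U hU hUne
  obtain ⟨y, hyU, hyD⟩ := hD.inter_open_nonempty U hU hUne
  obtain ⟨v, hvU, hvS⟩ := (h y hyD).inter_open_nonempty {v | Function.update y j v ∈ U}
    (hU.preimage (continuous_const.update j continuous_id)) ⟨y j, by simpa using hyU⟩
  exact ⟨_, hvU, hvS⟩

theorem AffineIndependent.insert_of_notMem_affineSpan {k V P ι : Type*} [DivisionRing k]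
    [AddCommGroup V] [Module k V] [AddTorsor V P] [DecidableEq ι] {p : ι → P} {t : Finset ι}
    {j : ι} (hj : j ∉ t) (ht : AffineIndependent k fun i : t => p i)
    (hp : p j ∉ affineSpan k (range fun i : t => p i)) :
    AffineIndependent k fun i : (insert j t : Finset ι) => p i := by
  set j' : (insert j t : Finset ι) := ⟨j, Finset.mem_insert_self j t⟩
  have hmem (i : {i // i ≠ j'}) : (i : ι) ∈ t :=
    (Finset.mem_insert.mp i.1.2).resolve_left fun h => i.2 (Subtype.ext h)
  refine AffineIndependent.affineIndependent_of_notMem_span (i := j') ?_ ?_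
  · exact ht.comp_embedding ⟨fun i : {i // i ≠ j'} => ⟨i, hmem i⟩, fun a b h => by
      simp only [Subtype.mk.injEq] at h
      exact Subtype.ext (Subtype.ext h)⟩
  · convert hp using 3
    ext z
    constructor
    · rintro ⟨i, hi, rfl⟩
      exact ⟨⟨i, hmem ⟨i, hi⟩⟩, rfl⟩
    · rintro ⟨⟨i, hi⟩, rfl⟩
      refine ⟨⟨i, Finset.mem_insert_of_mem hi⟩, fun h => hj ?_, rfl⟩
      simp only [j', Subtype.mk.injEq] at h
      exact h ▸ hi

theorem dense_setOf_affineIndependent_comp {X ι V : Type*} [TopologicalSpace X]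
    [AddCommGroup V] [Module ℝ V] [FiniteDimensional ℝ V] {F : X → V}
    (hF : ∀ A : AffineSubspace ℝ V, A ≠ ⊤ → Dense {x | F x ∉ A})
    (s : Finset ι) (hs : s.card ≤ finrank ℝ V + 1) :
    Dense {y : ι → X | AffineIndependent ℝ fun i : s => F (y i)} := by
  classical
  induction s using Finset.induction_on with
  | empty =>
    simpa only [affineIndependent_of_subsingleton, ofPred_true] using dense_univ
  | insert j t hj ih =>
    rw [Finset.card_insert_of_notMem hj] at hs
    refine dense_of_forall_dense_update (ih (by omega)) j fun y hy => ?_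
    have hspan : affineSpan ℝ (range fun i : t => F (y i)) ≠ ⊤ := by
      rw [Ne, hy.affineSpan_eq_top_iff_card_eq_finrank_add_one, Fintype.card_coe]
      omega
    refine (hF _ hspan).mono fun v hv => ?_
    have hyt (i : t) : Function.update y j v i = y i :=
      Function.update_of_ne (ne_of_mem_of_not_mem i.2 hj) v y
    refine AffineIndependent.insert_of_notMem_affineSpan
      (p := fun i => F (Function.update y j v i)) hj ?_ ?_
    · simpa only [hyt, mem_ofPred_eq] using hy
    · simpa only [Function.update_self, hyt, mem_ofPred_eq] using hv

theorem isOpen_setOf_affineIndependent_comp {X ι V : Type*} [TopologicalSpace X]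
    [NormedAddCommGroup V] [NormedSpace ℝ V] {F : X → V} (hF : Continuous F) (s : Finset ι) :
    IsOpen {y : ι → X | AffineIndependent ℝ fun i : s => F (y i)} :=
  isOpen_setOfPred_affineIndependent.preimage (f := fun (y : ι → X) (i : s) => F (y i))
    (by fun_prop)

theorem dense_setOf_notMem_of_analyticOnNhd {E V : Type*} [NormedAddCommGroup E]
    [NormedSpace ℝ E] [NormedAddCommGroup V] [InnerProductSpace ℝ V] [FiniteDimensional ℝ V]
    {F : E → V} (hF : AnalyticOnNhd ℝ F univ) (hspan : affineSpan ℝ (range F) = ⊤)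
    {A : AffineSubspace ℝ V} (hA : A ≠ ⊤) : Dense {x | F x ∉ A} := by
  by_contra hdense
  obtain ⟨U, hU, ⟨x₀, hx₀⟩, hUA⟩ : ∃ U, IsOpen U ∧ U.Nonempty ∧ ∀ x ∈ U, F x ∈ A := by
    simpa [dense_iff_inter_open, not_nonempty_iff_eq_empty, eq_empty_iff_forall_notMem]
      using hdense
  obtain ⟨w, hw, b, hb⟩ := AffineSubspace.exists_inner_eq_of_direction_ne_top
    (mt (AffineSubspace.direction_eq_top_iff_of_nonempty ⟨_, hUA x₀ hx₀⟩).mp hA)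
  have hconst : (fun x => ⟪w, F x⟫) = fun _ => b :=
    AnalyticOnNhd.eq_of_eventuallyEq
      (fun x _ => ((innerSL ℝ w).analyticAt _).comp (hF x trivial)) analyticOnNhd_const
      (Filter.eventually_of_mem (hU.mem_nhds hx₀) fun x hx => hb _ (hUA x hx))
  exact hw (eq_zero_of_inner_eq_of_affineSpan_eq_top hspan
    (forall_mem_range.mpr fun x => congrFun hconst x))

end Density

section Lift

variable {E : Type*} [NormedAddCommGroup E] [InnerProductSpace ℝ E]

noncomputable def paraboloidLift (v : E) : WithLp 2 (E × ℝ) := WithLp.toLp 2 (v, ‖v‖ ^ 2)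

theorem inner_paraboloidLift (w : WithLp 2 (E × ℝ)) (v : E) :
    ⟪w, paraboloidLift v⟫ = ⟪w.fst, v⟫ + w.snd * ‖v‖ ^ 2 := by
  simp [paraboloidLift, WithLp.prod_inner_apply, mul_comm]

theorem analyticOnNhd_paraboloidLift : AnalyticOnNhd ℝ (paraboloidLift (E := E)) univ := by
  intro v _
  have hsq : AnalyticAt ℝ (fun v : E => ‖v‖ ^ 2) v := by
    simp_rw [← real_inner_self_eq_norm_sq]
    exact ((innerSL ℝ (E := E)).analyticAt_bilinear (v, v)).comp
      (f := fun v => (v, v)) (analyticAt_id.prod analyticAt_id)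
  exact (WithLp.prodContinuousLinearEquiv 2 ℝ E ℝ).symm.analyticAt _ |>.comp
    (analyticAt_id.prod hsq)

theorem finrank_withLp_prod_real [FiniteDimensional ℝ E] :
    finrank ℝ (WithLp 2 (E × ℝ)) = finrank ℝ E + 1 := by
  rw [(WithLp.linearEquiv 2 ℝ (E × ℝ)).finrank_eq, finrank_prod, finrank_self]

theorem eq_zero_of_forall_inner_paraboloidLift_eq [Nontrivial E] {w : WithLp 2 (E × ℝ)} {b : ℝ}
    (h : ∀ v, ⟪w, paraboloidLift v⟫ = b) : w = 0 := by
  simp only [inner_paraboloidLift] at h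
  obtain ⟨u, hu⟩ := exists_ne (0 : E)
  have hb : b = 0 := by simpa using (h 0).symm
  have hsnd : w.snd = 0 := by
    have := congrArg₂ (· + ·) (h u) (h (-u))
    simp only [inner_neg_right, norm_neg, hb] at this
    have hu2 : ‖u‖ ^ 2 ≠ 0 := by positivity
    exact (mul_eq_zero.mp (by linarith : w.snd * ‖u‖ ^ 2 = 0)).resolve_right hu2
  have hfst : w.fst = 0 := by simpa [hsnd, hb] using h w.fst
  exact WithLp.ofLp_injective 2 (Prod.ext hfst hsnd)

theorem affineSpan_range_paraboloidLift [Nontrivial E] [FiniteDimensional ℝ E] :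
    affineSpan ℝ (range (paraboloidLift (E := E))) = ⊤ := by
  by_contra hne
  rw [← AffineSubspace.direction_eq_top_iff_of_nonempty
    ((range_nonempty _).mono (subset_affineSpan ℝ _))] at hne
  obtain ⟨w, hw, b, hb⟩ := AffineSubspace.exists_inner_eq_of_direction_ne_top hne
  exact hw (eq_zero_of_forall_inner_paraboloidLift_eq
    fun v => hb _ (mem_affineSpan ℝ (mem_range_self v)))

theorem dense_setOf_paraboloidLift_notMem [Nontrivial E] [FiniteDimensional ℝ E]
    {A : AffineSubspace ℝ (WithLp 2 (E × ℝ))} (hA : A ≠ ⊤) :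
    Dense {v : E | paraboloidLift v ∉ A} :=
  dense_setOf_notMem_of_analyticOnNhd (analyticOnNhd_paraboloidLift (E := E))
    affineSpan_range_paraboloidLift hA

theorem dist_sq_eq_iff_inner_paraboloidLift {x v : E} {K : ℝ} :
    dist x v ^ 2 = K ↔
      ⟪WithLp.toLp 2 ((-2 : ℝ) • x, 1), paraboloidLift v⟫ = K - ‖x‖ ^ 2 := by
  rw [inner_paraboloidLift, dist_eq_norm, norm_sub_sq_real]
  simp only [WithLp.toLp_fst, WithLp.toLp_snd, real_inner_smul_left, one_mul]
  constructor <;> intro h <;> linarith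

theorem exists_dist_eq_iff_exists_inner_paraboloidLift_eq [FiniteDimensional ℝ E] {ι : Type*}
    {y : ι → E} {s : Finset ι} (hs : finrank ℝ E + 1 ≤ s.card)
    (ha : ∀ t ⊆ s, t.card = finrank ℝ E + 1 → AffineIndependent ℝ fun i : t => y i) :
    (∃ (x : E) (r : ℝ), ∀ i ∈ s, dist x (y i) = r) ↔
      ∃ w ≠ (0 : WithLp 2 (E × ℝ)), ∃ b : ℝ, ∀ i ∈ s, ⟪w, paraboloidLift (y i)⟫ = b := by
  constructor
  · rintro ⟨x, r, hr⟩
    refine ⟨WithLp.toLp 2 ((-2 : ℝ) • x, 1), fun h => ?_, r ^ 2 - ‖x‖ ^ 2,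
      fun i hi => dist_sq_eq_iff_inner_paraboloidLift.mp (by rw [hr i hi])⟩
    simpa using congrArg WithLp.snd h
  rintro ⟨w, hw, b, hb⟩
  simp only [inner_paraboloidLift] at hb
  by_cases hc : w.snd = 0
  · -- the points would lie on the hyperplane `⟪w.fst, ·⟫ = b`
    obtain ⟨t, hts, htcard⟩ := Finset.exists_subset_card_eq hs
    refine absurd ((not_affineIndependent_iff_exists_inner_eq (by simpa using htcard)).mpr
      ⟨w.fst, fun h => hw (WithLp.ofLp_injective 2 (Prod.ext h hc)), b,
        fun i => by simpa [hc] using hb i (hts i.2)⟩) (not_not.mpr (ha t hts htcard))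
  set x : E := -(2 * w.snd)⁻¹ • w.fst
  have hw' : WithLp.toLp 2 ((-2 : ℝ) • x, 1) = (w.snd)⁻¹ • w := by
    refine WithLp.ofLp_injective 2 (Prod.ext ?_ ?_)
    · simp only [x, smul_smul, WithLp.ofLp_smul, Prod.smul_fst, WithLp.ofLp_fst]
      congr 1
      field_simp
    · simp [hc]
  refine ⟨x, √((w.snd)⁻¹ * b + ‖x‖ ^ 2), fun i hi => ?_⟩
  rw [← Real.sqrt_sq dist_nonneg, dist_sq_eq_iff_inner_paraboloidLift.mpr]
  rw [hw', real_inner_smul_left, inner_paraboloidLift, hb i hi]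
  ring

theorem not_exists_dist_eq_iff_affineIndependent_paraboloidLift [FiniteDimensional ℝ E]
    {ι : Type*} {y : ι → E} {s : Finset ι} (hs : s.card = finrank ℝ E + 2)
    (ha : ∀ t ⊆ s, t.card = finrank ℝ E + 1 → AffineIndependent ℝ fun i : t => y i) :
    (¬ ∃ (x : E) (r : ℝ), ∀ i ∈ s, dist x (y i) = r) ↔
      AffineIndependent ℝ fun i : s => paraboloidLift (y i) := by
  rw [exists_dist_eq_iff_exists_inner_paraboloidLift_eq (by omega) ha, iff_comm, ← not_iff_not,
    not_not, not_affineIndependent_iff_exists_inner_eq (by simp [hs, finrank_withLp_prod_real])]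
  simp

end Lift

theorem setOf_inGeneralPosition_eq (N k : ℕ) :
    {y : Fin k → EuclideanSpace ℝ (Fin N) | InGeneralPosition N k y} =
      (⋂ s ∈ {s : Finset (Fin k) | s.card ≤ N + 1},
        {y | AffineIndependent ℝ fun i : s => y i}) ∩
      ⋂ s ∈ {s : Finset (Fin k) | s.card = N + 2},
        {y | AffineIndependent ℝ fun i : s => paraboloidLift (y i)} := by
  ext y
  simp only [InGeneralPosition, mem_inter_iff, mem_iInter, mem_ofPred_eq]
  refine and_congr_right fun ha => forall₂_congr fun s hs => ?_
  exact not_exists_dist_eq_iff_affineIndependent_paraboloidLift (by simpa using hs)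
    fun t _ ht => ha t (by simp [ht])

theorem isOpen_dense_inGeneralPosition_general (N k : ℕ) (hN : 1 ≤ N) :
    IsOpen {y : Fin k → EuclideanSpace ℝ (Fin N) | InGeneralPosition N k y} ∧
    Dense {y : Fin k → EuclideanSpace ℝ (Fin N) | InGeneralPosition N k y} := by
  have : Nontrivial (EuclideanSpace ℝ (Fin N)) :=
    Module.nontrivial_of_finrank_pos (R := ℝ) (by rw [finrank_euclideanSpace_fin]; omega)
  have hopen₁ (s : Finset (Fin k)) (_ : s.card ≤ N + 1) := isOpen_setOf_affineIndependent_comp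
    (F := (id : EuclideanSpace ℝ (Fin N) → _)) continuous_id s
  have hopen₂ (s : Finset (Fin k)) (_ : s.card = N + 2) := isOpen_setOf_affineIndependent_comp
    (analyticOnNhd_paraboloidLift (E := EuclideanSpace ℝ (Fin N))).continuous s
  have hdense₁ (s : Finset (Fin k)) (hs : s.card ≤ N + 1) :=
    dense_setOf_affineIndependent_comp (F := (id : EuclideanSpace ℝ (Fin N) → _))
      (fun _ hA => dense_setOf_notMem_of_analyticOnNhd analyticOnNhd_id (by simp) hA) s
      (by simpa using hs)
  have hdense₂ (s : Finset (Fin k)) (hs : s.card = N + 2) :=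
    dense_setOf_affineIndependent_comp (F := paraboloidLift (E := EuclideanSpace ℝ (Fin N)))
      (fun _ => dense_setOf_paraboloidLift_notMem) s (by simp [hs, finrank_withLp_prod_real])
  rw [setOf_inGeneralPosition_eq]
  have hO₁ := (toFinite _).isOpen_biInter hopen₁
  exact ⟨hO₁.inter ((toFinite _).isOpen_biInter hopen₂),
    (dense_biInter_of_isOpen hopen₁ (to_countable _) hdense₁).inter_of_isOpen_left
      (dense_biInter_of_isOpen hopen₂ (to_countable _) hdense₂) hO₁⟩

/-- Lemma 2.2 of the paper. The set of `k`-tuples of points of `ℝ^N`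
in general position is open and dense in `(ℝ^N)^k`. -/
theorem isOpen_dense_inGeneralPosition (N k : ℕ) (hN : 1 ≤ N) (hk : 1 ≤ k) :
    IsOpen {y : Fin k → EuclideanSpace ℝ (Fin N) | InGeneralPosition N k y} ∧
    Dense {y : Fin k → EuclideanSpace ℝ (Fin N) | InGeneralPosition N k y} :=
  isOpen_dense_inGeneralPosition_general N k hN
end

section
/- Let N ≥ 1 and k ≥ 1. The set of tuples y : Fin k → ℝ^N all of whose points have rational coordinates and which satisfy: (a) for every subset s ⊆ Fin k of cardinality at most N + 1, the family (y_i)_{i ∈ s} is affinely independent, and (b) for every subset s ⊆ Fin k of cardinality N + 2, there is no point x ∈ ℝ^N equidistant from all the points y_i, i ∈ s, is dense in (ℝ^N)^k. -/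
/-!
The points are placed one at a time. If `y j`, `j ∈ S`, are already in general position, a new
point `w` destroys general position only if it lies in the affine span of at most `N` of them (a
proper affine subspace) or on the circumsphere of `N + 1` of them (these are affinely independent
and span `ℝ^N`, so the circumsphere is unique). These finitely many closed sets have empty
interior, so rational points outside all of them exist arbitrarily close to any prescribed point.
-/

open EuclideanGeometry Module Set

theorem Dense.exists_mem_open_forall_notMem {X α : Type*} [TopologicalSpace X] {D U : Set X}
    (hD : Dense D) (hU : IsOpen U) (hne : U.Nonempty) {T : Finset α} {F : α → Set X}
    (hF : ∀ t ∈ T, IsNowhereDense (F t)) :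
    ∃ x ∈ D ∩ U, ∀ t ∈ T, x ∉ F t := by
  set G := (fun t => (closure (F t))ᶜ) '' ↑T
  have hG : G.Finite := T.finite_toSet.image _
  have hGo : ∀ g ∈ G, IsOpen g := by
    rintro _ ⟨t, -, rfl⟩
    exact isClosed_closure.isOpen_compl
  have hGd : Dense (⋂₀ G) := hG.dense_sInter hGo <| by
    rintro _ ⟨t, ht, rfl⟩
    exact interior_eq_empty_iff_dense_compl.1 (hF t ht)
  obtain ⟨x, ⟨hxU, hxG⟩, hxD⟩ := hD.inter_open_nonempty _ (hU.inter (hG.isOpen_sInter hGo))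
    (hGd.inter_open_nonempty U hU hne)
  exact ⟨x, ⟨hxD, hxU⟩, fun t ht hxt => hxG _ ⟨t, ht, rfl⟩ (subset_closure hxt)⟩

section Affine

variable {k V P ι : Type*} [Field k] [AddCommGroup V] [Module k V] [AddTorsor V P]

theorem affineSpan_image_ne_top_of_card_le {p : ι → P} {t : Finset ι}
    (ht : t.card ≤ finrank k V) : affineSpan k (p '' t) ≠ ⊤ := by
  classical
  rcases t.eq_empty_or_nonempty with rfl | hne
  · simp
  intro htop
  have hle := finrank_vectorSpan_image_finset_le k p t (Nat.sub_one_add_one hne.card_pos.ne').symm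
  rw [Finset.coe_image, ← direction_affineSpan, htop, AffineSubspace.direction_top,
    finrank_top] at hle
  have := hne.card_pos
  omega

theorem affineIndependent_of_notMem_affineSpan_erase [DecidableEq ι] {p : ι → P}
    {s : Finset ι} {i : ι} (hi : i ∈ s) (hs : AffineIndependent k fun j : s.erase i => p j)
    (hp : p i ∉ affineSpan k (p '' ↑(s.erase i))) : AffineIndependent k fun j : s => p j := by
  let e : {j : s // j ≠ ⟨i, hi⟩} ↪ s.erase i :=
    ⟨fun j => ⟨j, Finset.mem_erase.2 ⟨fun h => j.2 (Subtype.ext h), j.1.2⟩⟩,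
      fun a b h => Subtype.ext (Subtype.ext (congrArg (fun j : s.erase i => (j : ι)) h))⟩
  refine AffineIndependent.affineIndependent_of_notMem_span (i := ⟨i, hi⟩)
    (hs.comp_embedding e) ?_
  convert hp using 3
  ext x
  aesop

end Affine

theorem AffineSubspace.isNowhereDense_of_ne_top {V : Type*} [NormedAddCommGroup V]
    [NormedSpace ℝ V] [FiniteDimensional ℝ V] {A : AffineSubspace ℝ V} (hA : A ≠ ⊤) :
    IsNowhereDense (A : Set V) := by
  rw [A.closed_of_finiteDimensional.isNowhereDense_iff, ← not_nonempty_iff_eq_empty,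
    A.convex.interior_nonempty_iff_affineSpan_eq_top, AffineSubspace.affineSpan_coe]
  exact hA

theorem AffineIndependent.exists_sphere_mem_of_cospherical_insert {V P ι : Type*}
    [NormedAddCommGroup V] [InnerProductSpace ℝ V] [FiniteDimensional ℝ V] [MetricSpace P]
    [NormedAddTorsor V P] [Fintype ι] {p : ι → P} (hp : AffineIndependent ℝ p)
    (hcard : Fintype.card ι = finrank ℝ V + 1) :
    ∃ c : Sphere P, ∀ w, Cospherical (insert w (range p)) → w ∈ c := by
  have : Nonempty ι := Fintype.card_pos_iff.1 (by omega)
  obtain ⟨c, -, hc⟩ := hp.existsUnique_dist_eq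
  refine ⟨c, fun w ⟨x, r, hxr⟩ => ?_⟩
  have hspan : affineSpan ℝ (range p) = ⊤ :=
    hp.affineSpan_eq_top_iff_card_eq_finrank_add_one.2 hcard
  have hxc : (⟨x, r⟩ : Sphere P) = c :=
    hc _ ⟨hspan ▸ AffineSubspace.mem_top ℝ V x,
      fun q hq => mem_sphere.2 (hxr q (mem_insert_of_mem w hq))⟩
  exact hxc ▸ mem_sphere.2 (hxr w (mem_insert w _))

section GeneralPosition

variable {V ι : Type*} [NormedAddCommGroup V] [InnerProductSpace ℝ V]

def GeneralPositionOn (S : Set ι) (y : ι → V) : Prop :=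
  ∀ s : Finset ι, ↑s ⊆ S →
    (s.card ≤ finrank ℝ V + 1 → AffineIndependent ℝ fun i : s => y i) ∧
    (s.card = finrank ℝ V + 2 → ¬ Cospherical (y '' s))

def degeneratingPoints (y : ι → V) (t : Finset ι) : Set V :=
  {w | (t.card ≤ finrank ℝ V ∧ w ∈ affineSpan ℝ (y '' t)) ∨
    (t.card = finrank ℝ V + 1 ∧ Cospherical (insert w (y '' t)))}

theorem isNowhereDense_degeneratingPoints [FiniteDimensional ℝ V] [Nontrivial V] (y : ι → V)
    (t : Finset ι) (ht : t.card = finrank ℝ V + 1 → AffineIndependent ℝ fun i : t => y i) :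
    IsNowhereDense (degeneratingPoints y t) := by
  rcases le_or_gt t.card (finrank ℝ V) with hle | hlt
  · refine (AffineSubspace.isNowhereDense_of_ne_top
      (affineSpan_image_ne_top_of_card_le (p := y) hle)).mono fun w hw => ?_
    exact hw.elim And.right fun h => absurd h.1 (by omega)
  by_cases heq : t.card = finrank ℝ V + 1
  · obtain ⟨c, hc⟩ := (ht heq).exists_sphere_mem_of_cospherical_insert
      (by rwa [Fintype.card_coe])
    refine (Metric.isClosed_sphere.isNowhereDense_iff.2 (interior_sphere' c.center c.radius)).mono
      fun w hw => ?_
    exact hw.elim (fun h => absurd h.1 (by omega)) fun h => hc w (image_eq_range y t ▸ h.2)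
  · exact isNowhereDense_empty.mono fun w hw => hw.elim (fun h => by omega) fun h => heq h.1

theorem generalPositionOn_empty (y : ι → V) : GeneralPositionOn ∅ y := by
  intro s hs
  rw [subset_empty_iff, Finset.coe_eq_empty] at hs
  subst hs
  exact ⟨fun _ => affineIndependent_of_subsingleton ℝ _, by simp⟩

theorem GeneralPositionOn.congr {S : Set ι} {y y' : ι → V} (hy : GeneralPositionOn S y)
    (h : EqOn y y' S) : GeneralPositionOn S y' := by
  intro s hs
  have hs' : EqOn y y' s := h.mono hs
  have hfun : (fun i : s => y i) = fun i : s => y' i := funext fun i => hs' i.2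
  rw [← hfun, ← hs'.image_eq]
  exact hy s hs

theorem GeneralPositionOn.update [DecidableEq ι] {S : Set ι} {y : ι → V} {i : ι} {w : V}
    (hy : GeneralPositionOn S y) (hi : i ∉ S)
    (hw : ∀ t : Finset ι, ↑t ⊆ S → w ∉ degeneratingPoints y t) :
    GeneralPositionOn (insert i S) (Function.update y i w) := by
  have hS : GeneralPositionOn S (Function.update y i w) :=
    hy.congr fun j hj => (Function.update_of_ne (ne_of_mem_of_not_mem hj hi) w y).symm
  intro s hs
  by_cases his : i ∈ s
  swap
  · exact hS s fun j hj => (hs hj).resolve_left fun h => his (h ▸ hj)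
  set t := s.erase i
  have htS : ↑t ⊆ S := fun j hj =>
    (hs (Finset.mem_of_mem_erase hj)).resolve_left (Finset.ne_of_mem_erase hj)
  have hty : Function.update y i w '' t = y '' t :=
    EqOn.image_eq fun j hj => Function.update_of_ne (Finset.ne_of_mem_erase hj) w y
  have hcard : t.card + 1 = s.card := Finset.card_erase_add_one his
  obtain ⟨hspan, hsphere⟩ := not_or.1 (hw t htS)
  constructor
  · intro hs_card
    refine affineIndependent_of_notMem_affineSpan_erase his ((hS t htS).1 (by omega)) ?_
    rw [Function.update_self, hty]
    exact fun h => hspan ⟨by omega, h⟩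
  · intro hs_card hcos
    rw [← Finset.insert_erase his, Finset.coe_insert, image_insert_eq, Function.update_self,
      hty] at hcos
    exact hsphere ⟨by omega, hcos⟩

theorem dense_generalPositionOn [FiniteDimensional ℝ V] [Nontrivial V] {D : Set V}
    (hD : Dense D) (S : Finset ι) :
    Dense {y : ι → V | (∀ i, y i ∈ D) ∧ GeneralPositionOn S y} := by
  classical
  induction S using Finset.induction_on with
  | empty =>
    simpa [generalPositionOn_empty, Set.pi] using dense_pi univ fun _ _ => hD
  | insert i S hi ih =>
    refine dense_iff_inter_open.2 fun U hU hne => ?_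
    obtain ⟨y, hyU, hyD, hyS⟩ := ih.inter_open_nonempty U hU hne
    have hO : IsOpen (Function.update y i ⁻¹' U) :=
      hU.preimage (continuous_const.update i continuous_id)
    obtain ⟨w, ⟨hwD, hwO⟩, hw⟩ := hD.exists_mem_open_forall_notMem hO
      ⟨y i, by simpa using hyU⟩ (T := S.powerset) fun t ht =>
        isNowhereDense_degeneratingPoints y t fun hcard =>
          (hyS t (Finset.coe_subset.2 (Finset.mem_powerset.1 ht))).1 (by omega)
    refine ⟨Function.update y i w, hwO, (Function.forall_update_iff y fun _ v => v ∈ D).2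
      ⟨hwD, fun j _ => hyD j⟩, ?_⟩
    rw [Finset.coe_insert]
    exact hyS.update (Finset.mem_coe.not.2 hi) fun t ht =>
      hw t (Finset.mem_powerset.2 (Finset.coe_subset.1 ht))

end GeneralPosition

theorem dense_setOf_forall_exists_rat_eq (κ : Type*) [Fintype κ] :
    Dense {x : EuclideanSpace ℝ κ | ∀ j, ∃ q : ℚ, x j = q} := by
  have h := (dense_pi univ fun _ _ => Rat.denseRange_cast).preimage
    (EuclideanSpace.equiv κ ℝ).toHomeomorph.isOpenMap
  convert h using 1
  ext x
  simp [eq_comm]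

theorem inGeneralPosition_iff_generalPositionOn_univ {N k : ℕ}
    (y : Fin k → EuclideanSpace ℝ (Fin N)) :
    InGeneralPosition N k y ↔ GeneralPositionOn univ y := by
  simp only [InGeneralPosition, GeneralPositionOn, finrank_euclideanSpace_fin, subset_univ,
    true_imp_iff, forall_and, Cospherical, forall_mem_image, Finset.mem_coe, dist_comm]

theorem dense_rational_inGeneralPosition_general (N k : ℕ) (hN : 1 ≤ N) :
    Dense {y : Fin k → EuclideanSpace ℝ (Fin N) |
      (∀ i : Fin k, ∀ j : Fin N, ∃ q : ℚ, y i j = (q : ℝ)) ∧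
      InGeneralPosition N k y} := by
  have : NeZero N := ⟨by omega⟩
  have h := dense_generalPositionOn (dense_setOf_forall_exists_rat_eq (Fin N))
    (Finset.univ : Finset (Fin k))
  simpa [inGeneralPosition_iff_generalPositionOn_univ] using h

/-- rational case of Lemma 2.2 of the paper. The set of `k`-tuples of
points of `ℝ^N` with rational coordinates which are in general position is dense in
`(ℝ^N)^k`. -/
theorem dense_rational_inGeneralPosition (N k : ℕ) (hN : 1 ≤ N) (hk : 1 ≤ k) :
    Dense {y : Fin k → EuclideanSpace ℝ (Fin N) |
      (∀ i : Fin k, ∀ j : Fin N, ∃ q : ℚ, y i j = (q : ℝ)) ∧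
      InGeneralPosition N k y} :=
  dense_rational_inGeneralPosition_general N k hN
end

section
/- Let f, g ∈ ℂ[u₁, u₂, u₃] be polynomials in three variables over ℂ. Assume: (i) f(x, y, 0) = g(x, y, 0) for all x, y ∈ ℂ; and (ii) f(x, z, z²) = g(x + z, z, z²) for all x, z ∈ ℂ. Then the one-variable polynomial function x ↦ f(x, 0, 0) is constant, i.e., f(x, 0, 0) = f(0, 0, 0) for every x ∈ ℂ. -/
/-!
Work in `ℂ[ε][t]`. Both hypotheses are polynomial identities over an infinite field, so they
persist at points with coordinates in any commutative `ℂ`-algebra. Hypothesis (i) at `(t, ε, 0)`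
and (ii) at `(t, ε, ε²) = (t, ε, 0)` give `g(t + ε, ε, 0) = g(t, ε, 0)`. To first order in `ε`
the difference is `ε · ∂ₜg(t, ε, 0) = ε · ∂ₜg(t, 0, 0)`, so `t ↦ g(t, 0, 0)` has zero derivative,
and by (i) so does `t ↦ f(t, 0, 0)`.
-/

open DualNumber TrivSqZeroExt

theorem Matrix.comp_vecCons {α β : Type*} {n : ℕ} (g : α → β) (a : α) (v : Fin n → α) :
    g ∘ vecCons a v = vecCons (g a) (g ∘ v) :=
  Fin.comp_cons g a v

theorem Matrix.comp_vecEmpty {α β : Type*} (g : α → β) : g ∘ ![] = ![] :=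
  Matrix.empty_eq _

namespace MvPolynomial

variable {R σ τ : Type*} [CommRing R] [IsDomain R] [Infinite R]
  {p q : MvPolynomial σ R} {u v : σ → MvPolynomial τ R}

theorem bind₁_eq_of_eval_eq (h : ∀ x : τ → R, eval (eval x ∘ u) p = eval (eval x ∘ v) q) :
    bind₁ u p = bind₁ v q :=
  funext fun x => (eval₂Hom_bind₁ _ _ _ _).trans <| (h x).trans (eval₂Hom_bind₁ _ _ _ _).symm

theorem aeval_eq_of_eval_eq {S : Type*} [CommSemiring S] [Algebra R S]
    (h : ∀ x : τ → R, eval (eval x ∘ u) p = eval (eval x ∘ v) q) (a : τ → S) :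
    aeval (aeval a ∘ u) p = aeval (aeval a ∘ v) q :=
  calc aeval (aeval a ∘ u) p = aeval a (bind₁ u p) := (aeval_bind₁ a u p).symm
    _ = aeval a (bind₁ v q) := by rw [bind₁_eq_of_eval_eq h]
    _ = aeval (aeval a ∘ v) q := aeval_bind₁ a v q

end MvPolynomial

namespace Polynomial

variable {R : Type*} [CommRing R]

theorem comp_X_add_C_eps (G : R[ε][X]) : G.comp (X + C ε) = G + derivative G * C ε := by
  rw [comp_eq_aeval, aeval_add_of_sq_eq_zero G (X : R[ε][X]) (C ε)
    (by rw [← C_pow, eps_pow_two, C_0]), aeval_X_left_apply, aeval_X_left_apply]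

theorem map_fst_eq_zero_of_mul_C_eps_eq_zero {Q : R[ε][X]} (h : Q * C ε = 0) :
    Q.map (fstHom R R R : R[ε] →+* R) = 0 := by
  ext n
  simpa [coeff_mul_C, DualNumber.snd_mul] using congr_arg (fun Q => snd (Q.coeff n)) h

end Polynomial

section ThreeVariables

open Polynomial

variable {R : Type*} [CommRing R]

theorem derivative_aeval_X_zero_zero_eq_zero {p : MvPolynomial (Fin 3) R}
    (h : MvPolynomial.aeval (![X + C ε, C ε, 0] : Fin 3 → R[ε][X]) p =
      MvPolynomial.aeval ![X, C ε, 0] p) :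
    derivative (MvPolynomial.aeval (![X, 0, 0] : Fin 3 → R[X]) p) = 0 := by
  have hcomp : (MvPolynomial.aeval ![X, C ε, 0] p).comp (X + C ε) =
      MvPolynomial.aeval (![X + C ε, C ε, 0] : Fin 3 → R[ε][X]) p := by
    rw [comp_eq_aeval, ← AlgHom.restrictScalars_apply R, MvPolynomial.comp_aeval_apply]
    congr 2; funext i; fin_cases i <;> simp
  have hmap : (MvPolynomial.aeval ![X, C ε, 0] p).map (fstHom R R R : R[ε] →+* R) =
      MvPolynomial.aeval ![X, 0, 0] p := by
    have : (mapAlgHom (fstHom R R R)).comp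
        (MvPolynomial.aeval (R := R) (![X, C ε, 0] : Fin 3 → R[ε][X])) =
        MvPolynomial.aeval (![X, 0, 0] : Fin 3 → R[X]) := by
      ext i; fin_cases i <;> simp
    exact congr($this p)
  rw [← hmap, derivative_map]
  apply map_fst_eq_zero_of_mul_C_eps_eq_zero
  simpa [hcomp, h] using comp_X_add_C_eps (MvPolynomial.aeval (![X, C ε, 0] : Fin 3 → R[ε][X]) p)

theorem eval_aeval_X_zero_zero (p : MvPolynomial (Fin 3) R) (x : R) :
    (MvPolynomial.aeval (![X, 0, 0] : Fin 3 → R[X]) p).eval x = MvPolynomial.eval ![x, 0, 0] p := by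
  rw [← coe_aeval_eq_eval, MvPolynomial.comp_aeval_apply, ← MvPolynomial.aeval_eq_eval]
  congr 2; funext i; fin_cases i <;> simp

end ThreeVariables

open Polynomial in
/-- core computation of Example 5.4 of the paper. If two complex
polynomials `f, g` in three variables satisfy `f(x, y, 0) = g(x, y, 0)` and
`f(x, z, z²) = g(x + z, z, z²)` for all complex `x, y, z`, then `x ↦ f(x, 0, 0)` is
constant. -/
theorem eval_const_of_two_pullbacks_agree (f g : MvPolynomial (Fin 3) ℂ)
    (h1 : ∀ x y : ℂ, MvPolynomial.eval ![x, y, 0] f = MvPolynomial.eval ![x, y, 0] g)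
    (h2 : ∀ x z : ℂ,
      MvPolynomial.eval ![x, z, z ^ 2] f = MvPolynomial.eval ![x + z, z, z ^ 2] g) :
    ∀ x : ℂ, MvPolynomial.eval ![x, 0, 0] f = MvPolynomial.eval ![0, 0, 0] f := by
  have hf : MvPolynomial.aeval (![X, C ε, 0] : Fin 3 → ℂ[ε][X]) f =
      MvPolynomial.aeval ![X, C ε, 0] g := by
    simpa only [Matrix.comp_vecCons, Matrix.comp_vecEmpty, MvPolynomial.aeval_X, map_zero,
      Matrix.cons_val_zero, Matrix.cons_val_one] using MvPolynomial.aeval_eq_of_eval_eq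
      (p := f) (q := g) (u := (![.X 0, .X 1, 0] : Fin 3 → MvPolynomial (Fin 2) ℂ))
      (v := ![.X 0, .X 1, 0])
      (fun x => by simpa [Matrix.comp_vecCons, Matrix.comp_vecEmpty] using h1 (x 0) (x 1))
      (![X, C ε] : Fin 2 → ℂ[ε][X])
  have hg : MvPolynomial.aeval (![X, C ε, 0] : Fin 3 → ℂ[ε][X]) f =
      MvPolynomial.aeval ![X + C ε, C ε, 0] g := by
    have hε : (C ε : ℂ[ε][X]) ^ 2 = 0 := by rw [← C_pow, eps_pow_two, C_0]
    have := MvPolynomial.aeval_eq_of_eval_eq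
      (p := f) (q := g) (u := (![.X 0, .X 1, .X 1 ^ 2] : Fin 3 → MvPolynomial (Fin 2) ℂ))
      (v := ![.X 0 + .X 1, .X 1, .X 1 ^ 2])
      (fun x => by simpa [Matrix.comp_vecCons, Matrix.comp_vecEmpty] using h2 (x 0) (x 1))
      (![X, C ε] : Fin 2 → ℂ[ε][X])
    simp only [Matrix.comp_vecCons, Matrix.comp_vecEmpty, MvPolynomial.aeval_X, map_add, map_pow,
      Matrix.cons_val_zero, Matrix.cons_val_one, hε] at this
    exact this
  have hconst := eq_C_of_derivative_eq_zero
    (derivative_aeval_X_zero_zero_eq_zero (hg.symm.trans hf))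
  intro x
  rw [h1, h1, ← eval_aeval_X_zero_zero, ← eval_aeval_X_zero_zero, hconst, eval_C, eval_C]
end

section
/- Let f, g ∈ ℂ[[u₁, u₂, u₃]] be formal power series in three variables over ℂ. Assume: (i) substituting (u₁, u₂, u₃) := (X, Y, 0) into f and into g yields the same power series in ℂ[[X, Y]]; and (ii) substituting (u₁, u₂, u₃) := (X, Z, Z²) into f yields the same power series in ℂ[[X, Z]] as substituting (u₁, u₂, u₃) := (X + Z, Z, Z²) into g. Then the one-variable power series obtained by substituting (u₁, u₂, u₃) := (X, 0, 0) into f is constant, i.e., all its coefficients in positive degree vanish. -/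
/-!
Compare the coefficients of `X^i Z` in condition (ii): on the left only `f_{i,1,0}`
contributes, on the right `g_{i,1,0}` and, through the shift `u₁ ↦ X + Z`, the derivative
term `(i + 1) g_{i+1,0,0}`. Condition (i) identifies `f_{i,1,0}` with `g_{i,1,0}`, so
`g_{i+1,0,0} = 0`, and then `f_{i+1,0,0} = g_{i+1,0,0} = 0` by (i) again.
-/

/-- The coefficient of the monomial `u₁^i u₂^j u₃^k` in a formal power series
`f ∈ ℂ[[u₁, u₂, u₃]]`. -/
noncomputable def coeff3 (f : MvPowerSeries (Fin 3) ℂ) (i j k : ℕ) : ℂ :=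
  MvPowerSeries.coeff
    (Finsupp.single (0 : Fin 3) i + Finsupp.single (1 : Fin 3) j +
      Finsupp.single (2 : Fin 3) k) f

open Finset

lemma filter_weight_eq_one :
    (range (1 + 1) ×ˢ range (1 + 1)).filter (fun p : ℕ × ℕ => p.1 + 2 * p.2 = 1)
      = {(1, 0)} := by
  ext p
  simp only [mem_filter, mem_product, mem_range, mem_singleton, Prod.ext_iff]
  omega

lemma filter_shifted_weight_eq_one (i : ℕ) :
    (range (i + 1 + 1) ×ˢ range (1 + 1) ×ˢ range (1 + 1)).filter
        (fun q : ℕ × ℕ × ℕ => i ≤ q.1 ∧ (q.1 - i) + q.2.1 + 2 * q.2.2 = 1)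
      = {(i, 1, 0), (i + 1, 0, 0)} := by
  ext q
  simp only [mem_filter, mem_product, mem_range, mem_insert, mem_singleton, Prod.ext_iff]
  omega

lemma coeff3_linear_in_Z_of_pullbacks_eq {f g : MvPowerSeries (Fin 3) ℂ} {i : ℕ}
    (h : ∑ p ∈ (range (1 + 1) ×ˢ range (1 + 1)).filter (fun p => p.1 + 2 * p.2 = 1),
        coeff3 f i p.1 p.2
      = ∑ q ∈ (range (i + 1 + 1) ×ˢ range (1 + 1) ×ˢ range (1 + 1)).filter
          (fun q => i ≤ q.1 ∧ (q.1 - i) + q.2.1 + 2 * q.2.2 = 1),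
        (q.1.choose i : ℂ) * coeff3 g q.1 q.2.1 q.2.2) :
    coeff3 f i 1 0 = coeff3 g i 1 0 + (i + 1 : ℂ) * coeff3 g (i + 1) 0 0 := by
  rw [filter_weight_eq_one, filter_shifted_weight_eq_one, sum_singleton,
    sum_pair (by simp)] at h
  simpa [Nat.choose_succ_self_right] using h

/-- (power-series strengthening of Example 5.4 of the paper), stated
coefficientwise. Let `f, g ∈ ℂ[[u₁, u₂, u₃]]` be formal power series. Hypothesis `h1`
says that substituting `(u₁, u₂, u₃) := (X, Y, 0)` into `f` and into `g` yields the same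
series in `ℂ[[X, Y]]`: the coefficient of `X^i Y^j` of the result of this substitution
is the coefficient of `u₁^i u₂^j u₃^0` of the original series. Hypothesis `h2` says that
substituting `(X, Z, Z²)` into `f` and `(X + Z, Z, Z²)` into `g` yields the same series
in `ℂ[[X, Z]]`: the coefficient of `X^i Z^m` of `f(X, Z, Z²)` is
`∑_{j + 2k = m} f_{i,j,k}`, while that of `g(X + Z, Z, Z²)` is
`∑_{a ≥ i, (a - i) + j + 2k = m} (a choose i) g_{a,j,k}` (a finite sum, since
necessarily `a ≤ i + m`, `j ≤ m`, `k ≤ m`). The conclusion is that the series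
`f(X, 0, 0) ∈ ℂ[[X]]` is constant: its coefficient `f_{n,0,0}` of `X^n` vanishes for
every `n > 0`. -/
theorem powerSeries_pullbacks_agree_implies_const
    (f g : MvPowerSeries (Fin 3) ℂ)
    (h1 : ∀ i j : ℕ, coeff3 f i j 0 = coeff3 g i j 0)
    (h2 : ∀ i m : ℕ,
      ∑ p ∈ (Finset.range (m + 1) ×ˢ Finset.range (m + 1)).filter
          (fun p => p.1 + 2 * p.2 = m),
        coeff3 f i p.1 p.2
      = ∑ q ∈ ((Finset.range (i + m + 1) ×ˢ Finset.range (m + 1) ×ˢ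
            Finset.range (m + 1)).filter
          (fun q => i ≤ q.1 ∧ (q.1 - i) + q.2.1 + 2 * q.2.2 = m)),
        (q.1.choose i : ℂ) * coeff3 g q.1 q.2.1 q.2.2) :
    ∀ n : ℕ, 0 < n → coeff3 f n 0 0 = 0 := by
  intro n hn
  obtain ⟨i, rfl⟩ : ∃ i, n = i + 1 := ⟨n - 1, by omega⟩
  have hlin := coeff3_linear_in_Z_of_pullbacks_eq (h2 i 1)
  rw [h1 i 1, left_eq_add] at hlin
  have hg : coeff3 g (i + 1) 0 0 = 0 :=
    (mul_eq_zero.mp hlin).resolve_left (by exact_mod_cast i.succ_ne_zero)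
  rw [h1 (i + 1) 0, hg]
end
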